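/- arXiv:2510.07617 — 4 statements merged into one kernel-verified Lean document; each statement's English description precedes it below -/
import Mathlib

section
/- Let X be a set, S a subset of the free monoid ⟨X⟩, and w any element of ⟨X⟩. If w is a left divisor of some u ∈ S (i.e., u = w·a for some a) and also a right divisor of some v ∈ S (i.e., v = b·w for some b), then S ∪ {w} is inverse-equivalent to S. -/
namespace AdjoinInverses

variable {X : Type*}

/-- The embedding of the free monoid on `X` into the free monoid on `X ⊕ S`. -/
def emb (S : Set (FreeMonoid X)) : FreeMonoid X →* FreeMonoid (X ⊕ S) :=
  FreeMonoid.map Sum.inl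

/-- The generator `i(w)` corresponding to `w ∈ S`. -/
def igen (S : Set (FreeMonoid X)) (w : S) : FreeMonoid (X ⊕ S) :=
  FreeMonoid.of (Sum.inr w)

/-- The defining relations `w ⬝ i(w) = 1` and `i(w) ⬝ w = 1` for `w ∈ S`. -/
inductive InvRel (S : Set (FreeMonoid X)) : FreeMonoid (X ⊕ S) → FreeMonoid (X ⊕ S) → Prop
  | mul_inv (w : S) : InvRel S (emb S w.1 * igen S w) 1
  | inv_mul (w : S) : InvRel S (igen S w * emb S w.1) 1

/-- The congruence generated by the defining relations. -/
def invCon (S : Set (FreeMonoid X)) : Con (FreeMonoid (X ⊕ S)) := conGen (InvRel S)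

/-- The monoid `⟨X : i(S)⟩` obtained from the free monoid on `X` by universally
adjoining a two-sided inverse to each element of `S`. -/
def AdjInv (S : Set (FreeMonoid X)) : Type _ := (invCon S).Quotient

instance (S : Set (FreeMonoid X)) : Monoid (AdjInv S) := Con.monoid _

/-- The natural homomorphism `⟨X⟩ → ⟨X : i(S)⟩`. -/
def natHom (S : Set (FreeMonoid X)) : FreeMonoid X →* AdjInv S :=
  ((invCon S).mk').comp (emb S)

/-- The adjoined inverse `i(w)`, as an element of `⟨X : i(S)⟩`. -/
def invElt (S : Set (FreeMonoid X)) (w : S) : AdjInv S :=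
  (invCon S).mk' (igen S w)

/-- `S` and `S'` are inverse-equivalent: each element of `S'` becomes invertible in
`⟨X : i(S)⟩` and each element of `S` becomes invertible in `⟨X : i(S')⟩`. -/
def InvEquiv (S S' : Set (FreeMonoid X)) : Prop :=
  (∀ w ∈ S', IsUnit (natHom S w)) ∧ ∀ w ∈ S, IsUnit (natHom S' w)

/-- Two (nonidentity) elements of the free monoid overlap: one can be written `a*b`
and the other `b*c` with `b ≠ 1` and at most one of `a`, `c` equal to `1`. -/
def Overlap (u v : FreeMonoid X) : Prop :=
  ∃ a b c : FreeMonoid X, b ≠ 1 ∧ (a ≠ 1 ∨ c ≠ 1) ∧ u = a * b ∧ v = b * c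

/-- A set `T` is overlap-free if no pair of elements of `T` (distinct or not) overlap. -/
def OverlapFree (T : Set (FreeMonoid X)) : Prop :=
  ∀ u ∈ T, ∀ v ∈ T, ¬ Overlap u v

lemma isUnit_natHom_mem (S : Set (FreeMonoid X)) {u : FreeMonoid X} (hu : u ∈ S) :
    IsUnit (natHom S u) := by
  refine ⟨⟨natHom S u, invElt S ⟨u, hu⟩, ?_, ?_⟩, rfl⟩
  · show (invCon S).mk' (emb S u) * (invCon S).mk' (igen S ⟨u, hu⟩) = 1
    rw [← map_mul, ← (invCon S).mk'.map_one]
    exact (Con.eq _).mpr (ConGen.Rel.of _ _ (InvRel.mul_inv ⟨u, hu⟩))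
  · show (invCon S).mk' (igen S ⟨u, hu⟩) * (invCon S).mk' (emb S u) = 1
    rw [← map_mul, ← (invCon S).mk'.map_one]
    exact (Con.eq _).mpr (ConGen.Rel.of _ _ (InvRel.inv_mul ⟨u, hu⟩))

lemma isUnit_of_left_right {M : Type*} [Monoid M] {x l r : M}
    (hl : l * x = 1) (hr : x * r = 1) : IsUnit x := by
  have hlr : l = r := by rw [← one_mul r, ← hl, mul_assoc, hr, mul_one]
  exact ⟨⟨x, r, hr, hlr ▸ hl⟩, rfl⟩

/-- if `w` is a left divisor of some `u ∈ S` and a right divisor of some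
`v ∈ S`, then `S ∪ {w}` is inverse-equivalent to `S`. -/
theorem stmt2 (X : Type*) (S : Set (FreeMonoid X)) (w : FreeMonoid X)
    (h1 : ∃ u ∈ S, ∃ a : FreeMonoid X, u = w * a)
    (h2 : ∃ v ∈ S, ∃ b : FreeMonoid X, v = b * w) :
    InvEquiv (S ∪ {w}) S := by
  constructor
  · intro z hz
    exact isUnit_natHom_mem (S ∪ {w}) (Or.inl hz)
  · intro z hz
    rcases hz with hz | hz
    · exact isUnit_natHom_mem S hz
    · rcases hz with rfl
      obtain ⟨u, hu, a, rfl⟩ := h1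
      obtain ⟨v, hv, b, rfl⟩ := h2
      obtain ⟨U, hU⟩ := isUnit_natHom_mem S hu
      obtain ⟨V, hV⟩ := isUnit_natHom_mem S hv
      refine isUnit_of_left_right (l := ↑V⁻¹ * natHom S b) (r := natHom S a * ↑U⁻¹) ?_ ?_
      · rw [mul_assoc, ← map_mul, ← hV, V.inv_mul]
      · rw [← mul_assoc, ← map_mul, ← hU, U.mul_inv]

end AdjoinInverses
end

section
/- Let X be a set and S any finite subset of the free monoid ⟨X⟩. Then there exists a finite overlap-free subset T of ⟨X⟩\{1} which is inverse-equivalent to S. -/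
/-!
The words that become invertible in `⟨X : i(S)⟩` form a submonoid `invertibles S`, and `S`, `S'`
are inverse-equivalent exactly when these submonoids coincide. If `u = a * b` and `v = b * c` in
`S` overlap, then `b` has a right inverse (through `b * c`) and a left inverse (through `a * b`),
so `a`, `b`, `c` all become invertible. Hence one of `u`, `v` can be replaced by its two nonempty
factors without changing `invertibles S`, and so can deleting `1`. Both moves lower
`∑ w ∈ S, 3 ^ |w|`, so they end at an overlap-free set.
-/

theorem isUnit_of_isUnit_mul_of_isUnit_mul {M : Type*} [Monoid M] {x y z : M}
    (hxy : IsUnit (x * y)) (hyz : IsUnit (y * z)) : IsUnit x ∧ IsUnit y ∧ IsUnit z := by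
  have hy : IsUnit y := isUnit_iff_exists_and_exists.2
    ⟨⟨z * ↑hyz.unit⁻¹, by rw [← mul_assoc, hyz.mul_val_inv]⟩,
      ⟨↑hxy.unit⁻¹ * x, by rw [mul_assoc, hxy.val_inv_mul]⟩⟩
  refine ⟨?_, hy, ?_⟩
  · rwa [← hy.unit_spec, Units.isUnit_mul_units] at hxy
  · rwa [← hy.unit_spec, Units.isUnit_units_mul] at hyz

theorem Finset.sum_insert_le {ι M : Type*} [DecidableEq ι] [AddCommMonoid M] [PartialOrder M]
    [CanonicallyOrderedAdd M] (f : ι → M) (a : ι) (s : Finset ι) :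
    ∑ x ∈ insert a s, f x ≤ f a + ∑ x ∈ s, f x := by
  by_cases ha : a ∈ s
  · rw [Finset.insert_eq_of_mem ha]
    exact le_add_self
  · rw [Finset.sum_insert ha]

theorem three_pow_add_three_pow_lt {m n : ℕ} (hm : m ≠ 0) (hn : n ≠ 0) :
    3 ^ m + 3 ^ n < 3 ^ (m + n) := by
  have hm3 : 3 ≤ 3 ^ m := Nat.le_self_pow hm 3
  have hn3 : 3 ≤ 3 ^ n := Nat.le_self_pow hn 3
  rw [pow_add]
  nlinarith

theorem FreeMonoid.lift_map_apply {α β M : Type*} [Monoid M] (g : β → M) (f : α → β)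
    (x : FreeMonoid α) : FreeMonoid.lift g (FreeMonoid.map f x) = FreeMonoid.lift (g ∘ f) x :=
  DFunLike.congr_fun (FreeMonoid.hom_eq (f := (FreeMonoid.lift g).comp (FreeMonoid.map f))
    (g := FreeMonoid.lift (g ∘ f)) fun _ => rfl) x

namespace AdjoinInverses

variable {X : Type*}

section AdjInv

variable {S S' : Set (FreeMonoid X)}

theorem isUnit_natHom {w : FreeMonoid X} (hw : w ∈ S) : IsUnit (natHom S w) := by
  have hrel (p q : FreeMonoid (X ⊕ S)) (h : InvRel S p q) :
      (p : (invCon S).Quotient) = q :=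
    (Con.eq _).2 (ConGen.Rel.of _ _ h)
  refine isUnit_iff_exists.2 ⟨invElt S ⟨w, hw⟩, ?_, ?_⟩
  · exact hrel _ _ (InvRel.mul_inv ⟨w, hw⟩)
  · exact hrel _ _ (InvRel.inv_mul ⟨w, hw⟩)

noncomputable def AdjInv.lift {M : Type*} [Monoid M] (f : FreeMonoid X →* M)
    (hf : ∀ w ∈ S, IsUnit (f w)) : AdjInv S →* M :=
  (invCon S).lift
    (FreeMonoid.lift (Sum.elim (f ∘ FreeMonoid.of) fun w => ↑(hf w.1 w.2).unit⁻¹))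
    (Con.conGen_le.2 fun p q h => by
      rcases h with w | w <;>
      simp [emb, igen, FreeMonoid.lift_map_apply, FreeMonoid.lift_restrict])

theorem AdjInv.lift_natHom {M : Type*} [Monoid M] (f : FreeMonoid X →* M)
    (hf : ∀ w ∈ S, IsUnit (f w)) (u : FreeMonoid X) : AdjInv.lift f hf (natHom S u) = f u :=
  (Con.lift_mk' _ (emb S u)).trans <| by
    rw [emb, FreeMonoid.lift_map_apply, Sum.elim_comp_inl, FreeMonoid.lift_restrict]

variable (S) in
def invertibles : Submonoid (FreeMonoid X) :=
  (IsUnit.submonoid (AdjInv S)).comap (natHom S)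

theorem mem_invertibles {w : FreeMonoid X} : w ∈ invertibles S ↔ IsUnit (natHom S w) :=
  IsUnit.mem_submonoid_iff _

theorem subset_invertibles : S ⊆ invertibles S := fun _ => isUnit_natHom

theorem invertibles_le_iff : invertibles S' ≤ invertibles S ↔ S' ⊆ invertibles S := by
  refine ⟨fun h => subset_invertibles.trans h, fun h w hw => ?_⟩
  have hS' : ∀ w ∈ S', IsUnit (natHom S w) := fun w hw => mem_invertibles.1 (h hw)
  have := (mem_invertibles.1 hw).map (AdjInv.lift (natHom S) hS')
  rwa [AdjInv.lift_natHom] at this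

theorem invEquiv_iff_invertibles_eq : InvEquiv S S' ↔ invertibles S = invertibles S' := by
  rw [le_antisymm_iff, invertibles_le_iff, invertibles_le_iff]
  exact and_comm

theorem invertibles_diff_one : invertibles (S \ {1}) = invertibles S := by
  refine le_antisymm (invertibles_le_iff.2 (Set.sdiff_subset.trans subset_invertibles))
    (invertibles_le_iff.2 fun w hw => ?_)
  obtain rfl | hw1 := eq_or_ne w 1
  · exact one_mem _
  · exact subset_invertibles ⟨hw, hw1⟩

theorem invertibles_insert_insert_diff {a b : FreeMonoid X} (hab : a * b ∈ S)
    (ha : a ∈ invertibles S) (hb : b ∈ invertibles S) :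
    invertibles (insert a (insert b (S \ {a * b}))) = invertibles S := by
  refine le_antisymm (invertibles_le_iff.2 ?_) (invertibles_le_iff.2 fun w hw => ?_)
  · rintro w (rfl | rfl | ⟨hw, -⟩)
    exacts [ha, hb, subset_invertibles hw]
  · obtain rfl | hwab := eq_or_ne w (a * b)
    · exact mul_mem (subset_invertibles (Set.mem_insert a _))
        (subset_invertibles (Set.mem_insert_of_mem a (Set.mem_insert b _)))
    · exact subset_invertibles (Set.mem_insert_of_mem a (Set.mem_insert_of_mem b ⟨hw, hwab⟩))

theorem exists_mul_mem_of_not_overlapFree (h : ¬ OverlapFree S) :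
    ∃ a b : FreeMonoid X, a ≠ 1 ∧ b ≠ 1 ∧ a * b ∈ S ∧ a ∈ invertibles S ∧ b ∈ invertibles S := by
  simp only [OverlapFree, Overlap, not_forall, not_not] at h
  obtain ⟨u, hu, v, hv, a, b, c, hb, hac, rfl, rfl⟩ := h
  obtain ⟨ha', hb', hc'⟩ := isUnit_of_isUnit_mul_of_isUnit_mul
    (map_mul (natHom S) a b ▸ isUnit_natHom hu) (map_mul (natHom S) b c ▸ isUnit_natHom hv)
  rcases hac with ha | hc
  · exact ⟨a, b, ha, hb, hu, ha', hb'⟩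
  · exact ⟨b, c, hb, hc, hv, hb', hc'⟩

end AdjInv

/-- Base `3` since `3 ^ m + 3 ^ n < 3 ^ (m + n)` for `m, n ≥ 1`; base `2` fails at `m = n = 1`. -/
def weight (S : Finset (FreeMonoid X)) : ℕ := ∑ w ∈ S, 3 ^ w.length

theorem weight_erase_lt [DecidableEq (FreeMonoid X)] {S : Finset (FreeMonoid X)}
    {w : FreeMonoid X} (hw : w ∈ S) : weight (S.erase w) < weight S :=
  Finset.sum_erase_lt_of_pos hw (by positivity)

theorem weight_insert_insert_erase_lt [DecidableEq (FreeMonoid X)] {S : Finset (FreeMonoid X)}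
    {a b : FreeMonoid X} (ha : a ≠ 1) (hb : b ≠ 1) (hab : a * b ∈ S) :
    weight (insert a (insert b (S.erase (a * b)))) < weight S := by
  have hlen : 3 ^ a.length + 3 ^ b.length < 3 ^ (a * b).length := by
    rw [FreeMonoid.length_mul]
    exact three_pow_add_three_pow_lt (by simpa using ha) (by simpa using hb)
  have hsplit := Finset.sum_erase_add S (fun w => 3 ^ w.length) hab
  have hins_a := Finset.sum_insert_le (fun w => 3 ^ w.length) a (insert b (S.erase (a * b)))
  have hins_b := Finset.sum_insert_le (fun w => 3 ^ w.length) b (S.erase (a * b))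
  unfold weight
  omega

theorem exists_overlapFree_invertibles_eq [DecidableEq (FreeMonoid X)]
    (S : Finset (FreeMonoid X)) :
    ∃ T : Finset (FreeMonoid X), 1 ∉ T ∧ OverlapFree (T : Set (FreeMonoid X)) ∧
      invertibles (T : Set (FreeMonoid X)) = invertibles S := by
  by_cases h1 : 1 ∈ S
  · obtain ⟨T, hT1, hT, hTS⟩ := exists_overlapFree_invertibles_eq (S.erase 1)
    refine ⟨T, hT1, hT, ?_⟩
    rw [hTS, Finset.coe_erase, invertibles_diff_one]
  by_cases hS : OverlapFree (S : Set (FreeMonoid X))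
  · exact ⟨S, h1, hS, rfl⟩
  obtain ⟨a, b, ha, hb, hab, ha', hb'⟩ := exists_mul_mem_of_not_overlapFree hS
  obtain ⟨T, hT1, hT, hTS⟩ :=
    exists_overlapFree_invertibles_eq (insert a (insert b (S.erase (a * b))))
  refine ⟨T, hT1, hT, ?_⟩
  rw [hTS, Finset.coe_insert, Finset.coe_insert, Finset.coe_erase,
    invertibles_insert_insert_diff hab ha' hb']
termination_by weight S
decreasing_by
  · exact weight_erase_lt h1
  · exact weight_insert_insert_erase_lt ha hb hab

/-- any finite subset `S` of the free monoid is inverse-equivalent to a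
finite overlap-free subset `T` of `⟨X⟩ \ {1}`. -/
theorem stmt3 (X : Type*) (S : Set (FreeMonoid X)) (hS : S.Finite) :
    ∃ T : Set (FreeMonoid X),
      T.Finite ∧ (1 : FreeMonoid X) ∉ T ∧ OverlapFree T ∧ InvEquiv S T := by
  classical
  obtain ⟨T, hT1, hT, hTS⟩ := exists_overlapFree_invertibles_eq hS.toFinset
  refine ⟨T, T.finite_toSet, hT1, hT, ?_⟩
  rw [invEquiv_iff_invertibles_eq, hTS, hS.coe_toFinset]

end AdjoinInverses
end

section
/- Let X be a set and T an overlap-free subset of ⟨X⟩\{1}. Then an element u of ⟨X : i(T)⟩ has a right inverse if and only if u lies in the submonoid of ⟨X : i(T)⟩ generated by the elements i(w) for w ∈ T together with the images of all nonempty initial substrings (prefixes, not necessarily proper) of elements of T. Dually, u has a left inverse if and only if u lies in the submonoid generated by the elements i(w) for w ∈ T together with the images of all nonempty final substrings (suffixes) of elements of T. -/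
/-!
Read the relations `w i(w) = 1` and `i(w) w = 1` as rules deleting a redex from a word over
`X ⊔ T`. Since `T` is overlap-free, every critical pair of this rewriting system is trivial: one
redex never contains another properly, and two redexes overlap only as `w i(w) w` or `i(w) w i(w)`,
where deleting either leaves the same word. So the system is Church–Rosser, and `u v = 1` means
that the word `u v` reduces to the empty word. Each redex deleted along the way lies in `u`, in `v`,
or straddles the boundary, splitting there as `p ∣ q i(w)` or `i(w) p ∣ q` with `w = p q`; hence
`u` is a product of the `i(w)` and of prefixes, and `v` one of the `i(w)` and of suffixes.
Conversely, the generators `p` and `i(w)` have the right inverses `q i(w)` and `w`.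
-/

namespace AdjoinInverses

variable {X : Type*}

section Inverses

variable {M : Type*} [Monoid M] {s : Set M}

theorem exists_right_inv_of_mem_closure (hs : ∀ x ∈ s, ∃ y, x * y = 1) {x : M}
    (hx : x ∈ Submonoid.closure s) : ∃ y, x * y = 1 := by
  induction hx using Submonoid.closure_induction with
  | mem x hx => exact hs x hx
  | one => exact ⟨1, one_mul 1⟩
  | mul x y _ _ hx hy =>
    obtain ⟨x', hx'⟩ := hx
    obtain ⟨y', hy'⟩ := hy
    exact ⟨y' * x', by rw [mul_assoc, ← mul_assoc y, hy', one_mul, hx']⟩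

theorem exists_left_inv_of_mem_closure (hs : ∀ x ∈ s, ∃ y, y * x = 1) {x : M}
    (hx : x ∈ Submonoid.closure s) : ∃ y, y * x = 1 := by
  induction hx using Submonoid.closure_induction with
  | mem x hx => exact hs x hx
  | one => exact ⟨1, one_mul 1⟩
  | mul x y _ _ hx hy =>
    obtain ⟨x', hx'⟩ := hx
    obtain ⟨y', hy'⟩ := hy
    exact ⟨y' * x', by rw [mul_assoc, ← mul_assoc x', hx', one_mul, hy']⟩

end Inverses

open Relation

section Deletion

variable {α : Type*}

def DelStep (R : Set (List α)) (x y : List α) : Prop :=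
  ∃ a r b, r ∈ R ∧ x = a ++ r ++ b ∧ y = a ++ b

structure TrivialCriticalPairs (R : Set (List α)) : Prop where
  infix_eq_nil : ∀ r ∈ R, ∀ r' ∈ R, ∀ m t, r = m ++ r' ++ t → m = [] ∧ t = []
  overlap_eq : ∀ m s t, m ≠ [] → s ≠ [] → t ≠ [] → m ++ s ∈ R → s ++ t ∈ R → m = t

variable {R : Set (List α)}

theorem DelStep.append_left (c : List α) {x y : List α} (h : DelStep R x y) :
    DelStep R (c ++ x) (c ++ y) := by
  obtain ⟨a, r, b, hr, rfl, rfl⟩ := h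
  exact ⟨c ++ a, r, b, hr, by simp, by simp⟩

theorem DelStep.append_right (c : List α) {x y : List α} (h : DelStep R x y) :
    DelStep R (x ++ c) (y ++ c) := by
  obtain ⟨a, r, b, hr, rfl, rfl⟩ := h
  exact ⟨a, r, b ++ c, hr, by simp, by simp⟩

theorem reflTransGen_delStep_append {x y x' y' : List α} (h : ReflTransGen (DelStep R) x y)
    (h' : ReflTransGen (DelStep R) x' y') : ReflTransGen (DelStep R) (x ++ x') (y ++ y') :=
  (h.lift (· ++ x') fun _ _ => DelStep.append_right x').trans
    (h'.lift (y ++ ·) fun _ _ => DelStep.append_left y)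

theorem eq_nil_of_reflTransGen_delStep_nil {z : List α} (h : ReflTransGen (DelStep R) [] z) :
    z = [] := by
  induction h with
  | refl => rfl
  | tail _ hstep ih =>
    subst ih
    obtain ⟨a, r, b, -, hnil, rfl⟩ := hstep
    simp_all

namespace TrivialCriticalPairs

variable (hR : TrivialCriticalPairs R)
include hR

theorem overlap_eq_of_ne_nil {m s t : List α} (hs : s ≠ []) (h₁ : m ++ s ∈ R)
    (h₂ : s ++ t ∈ R) : m = t := by
  by_cases hm : m = []
  · subst hm
    exact ((hR.infix_eq_nil _ h₂ _ h₁ [] t (by simp)).2).symm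
  by_cases ht : t = []
  · subst ht
    exact (hR.infix_eq_nil _ h₁ _ h₂ m [] (by simp)).1
  exact hR.overlap_eq m s t hm hs ht h₁ h₂

theorem join_of_append_eq {r₁ r₂ a b₁ m b₂ : List α} (h₁ : r₁ ∈ R) (h₂ : r₂ ∈ R)
    (h : r₁ ++ b₁ = m ++ (r₂ ++ b₂)) :
    Join (ReflGen (DelStep R)) (a ++ b₁) (a ++ m ++ b₂) := by
  rcases List.append_eq_append_iff.1 h with ⟨m', rfl, rfl⟩ | ⟨s, rfl, hs⟩
  · exact ⟨a ++ m' ++ b₂, .single ⟨a ++ m', r₂, b₂, h₂, by simp, rfl⟩,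
      .single ⟨a, r₁, m' ++ b₂, h₁, by simp, by simp⟩⟩
  rcases List.append_eq_append_iff.1 hs with ⟨t, rfl, rfl⟩ | ⟨t, rfl, rfl⟩
  · obtain ⟨rfl, rfl⟩ := hR.infix_eq_nil _ h₁ _ h₂ m t (by simp)
    simp only [List.append_nil, List.nil_append]
    exact ⟨_, .refl, .refl⟩
  by_cases hs : s = []
  · subst hs
    exact ⟨a ++ b₂, .single ⟨a, t, b₂, h₂, by simp, rfl⟩,
      .single ⟨a, m, b₂, by simpa using h₁, by simp, rfl⟩⟩
  obtain rfl := hR.overlap_eq_of_ne_nil hs h₁ h₂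
  simp only [List.append_assoc]
  exact ⟨_, .refl, .refl⟩

theorem diamond {x y z : List α} (hy : DelStep R x y) (hz : DelStep R x z) :
    Join (ReflGen (DelStep R)) y z := by
  obtain ⟨a₁, r₁, b₁, h₁, rfl, rfl⟩ := hy
  obtain ⟨a₂, r₂, b₂, h₂, heq, rfl⟩ := hz
  simp only [List.append_assoc] at heq
  rcases List.append_eq_append_iff.1 heq with ⟨m, rfl, h⟩ | ⟨m, rfl, h⟩
  · simpa using hR.join_of_append_eq (a := a₁) h₁ h₂ h
  · exact Join.symm.symm _ _ (by simpa using hR.join_of_append_eq (a := a₂) h₂ h₁ h)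

def joinCon : Con (FreeMonoid α) where
  r x y := Join (ReflTransGen (DelStep R)) x.toList y.toList
  iseqv := (equivalence_join_reflTransGen (r := DelStep R) fun _ _ _ hb hc =>
    (hR.diamond hb hc).imp fun _ hd => ⟨hd.1, hd.2.to_reflTransGen⟩).comap FreeMonoid.toList
  mul' := fun ⟨c, hc₁, hc₂⟩ ⟨c', hc₁', hc₂'⟩ =>
    ⟨c ++ c', reflTransGen_delStep_append hc₁ hc₁', reflTransGen_delStep_append hc₂ hc₂'⟩

theorem reflTransGen_nil_of_joinCon {x : FreeMonoid α} (h : joinCon hR x 1) :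
    ReflTransGen (DelStep R) x.toList [] := by
  obtain ⟨c, hxc, hc⟩ := h
  rwa [eq_nil_of_reflTransGen_delStep_nil hc] at hxc

end TrivialCriticalPairs

theorem map_mem_of_reflTransGen_delStep_nil {M : Type*} [Monoid M] (φ : FreeMonoid α →* M)
    {P S : Submonoid M} (hφ : ∀ r ∈ R, φ (.ofList r) = 1)
    (hsplit : ∀ r ∈ R, ∀ r₁ r₂, r = r₁ ++ r₂ → φ (.ofList r₁) ∈ P ∧ φ (.ofList r₂) ∈ S)
    {u v : List α} (h : ReflTransGen (DelStep R) (u ++ v) []) :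
    φ (.ofList u) ∈ P ∧ φ (.ofList v) ∈ S := by
  generalize hx : u ++ v = x at h
  induction h using ReflTransGen.head_induction_on generalizing u v with
  | refl =>
    obtain ⟨rfl, rfl⟩ := List.append_eq_nil_iff.1 hx
    simp only [FreeMonoid.ofList_nil, map_one]
    exact ⟨one_mem _, one_mem _⟩
  | head hstep _ ih =>
    obtain ⟨a, r, b, hr, rfl, rfl⟩ := hstep
    simp only [List.append_assoc] at hx
    rcases List.append_eq_append_iff.1 hx.symm with ⟨m, rfl, hm⟩ | ⟨m, rfl, rfl⟩
    · rcases List.append_eq_append_iff.1 hm with ⟨k, rfl, rfl⟩ | ⟨k, rfl, rfl⟩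
      · simpa [hφ r hr] using ih (u := a ++ k) (v := v) (by simp)
      · obtain ⟨hm, hk⟩ := hsplit _ hr m k rfl
        obtain ⟨ha, hb⟩ := ih rfl
        simpa using ⟨mul_mem ha hm, mul_mem hk hb⟩
    · simpa [hφ r hr] using ih (u := u) (v := m ++ b) (by simp)

end Deletion

section Redexes

variable {T : Set (FreeMonoid X)}

def embList (T : Set (FreeMonoid X)) (p : FreeMonoid X) : List (X ⊕ T) := (emb T p).toList

@[simp]
theorem embList_one : embList T 1 = [] := rfl

theorem embList_eq_nil {p : FreeMonoid X} : embList T p = [] ↔ p = 1 := by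
  rw [embList, emb, FreeMonoid.toList_map, List.map_eq_nil_iff,
    FreeMonoid.toList.injective.eq_iff' FreeMonoid.toList_one]

theorem embList_injective : Function.Injective (embList T) := fun _ _ h =>
  FreeMonoid.toList.injective (List.map_injective_iff.2 Sum.inl_injective h)

theorem inr_not_mem_embList (w : T) (p : FreeMonoid X) : Sum.inr w ∉ embList T p := by
  simp [embList, emb, FreeMonoid.toList_map]

theorem embList_eq_append {p : FreeMonoid X} {l₁ l₂ : List (X ⊕ T)} (h : embList T p = l₁ ++ l₂) :
    ∃ p₁ p₂, p = p₁ * p₂ ∧ l₁ = embList T p₁ ∧ l₂ = embList T p₂ := by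
  obtain ⟨l₁', l₂', hp, rfl, rfl⟩ := List.map_eq_append_iff.1 h
  exact ⟨.ofList l₁', .ofList l₂', FreeMonoid.toList.injective hp, rfl, rfl⟩

def redexesOf (w : T) : Set (List (X ⊕ T)) := {embList T w ++ [.inr w], .inr w :: embList T w}

def redexes (T : Set (FreeMonoid X)) : Set (List (X ⊕ T)) := ⋃ w, redexesOf w

theorem eq_of_inr_mem_redexesOf {w w' : T} {r : List (X ⊕ T)} (hr : r ∈ redexesOf w)
    (h : Sum.inr w' ∈ r) : w' = w := by
  rcases hr with rfl | rfl <;> simpa [inr_not_mem_embList] using h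

theorem length_of_mem_redexesOf {w : T} {r : List (X ⊕ T)} (hr : r ∈ redexesOf w) :
    r.length = (embList T w).length + 1 := by
  rcases hr with rfl | rfl <;> simp

theorem redexes_infix_eq_nil {r r' m t : List (X ⊕ T)} (hr : r ∈ redexes T)
    (hr' : r' ∈ redexes T) (h : r = m ++ r' ++ t) : m = [] ∧ t = [] := by
  obtain ⟨w, hw⟩ := Set.mem_iUnion.1 hr
  obtain ⟨w', hw'⟩ := Set.mem_iUnion.1 hr'
  have hmem : Sum.inr w' ∈ r := h ▸ by rcases hw' with rfl | rfl <;> simp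
  obtain rfl := eq_of_inr_mem_redexesOf hw hmem
  have hlen := congrArg List.length h
  simp only [List.length_append, length_of_mem_redexesOf hw, length_of_mem_redexesOf hw'] at hlen
  exact ⟨List.eq_nil_of_length_eq_zero (by omega), List.eq_nil_of_length_eq_zero (by omega)⟩

theorem append_mem_redexesOf_cases {w : T} {l₁ l₂ : List (X ⊕ T)} (h : l₁ ++ l₂ ∈ redexesOf w) :
    l₁ = [] ∨ l₂ = [] ∨
      (∃ p q, w.1 = p * q ∧ l₁ = embList T p ∧ l₂ = embList T q ++ [.inr w]) ∨
      (∃ p q, w.1 = p * q ∧ l₁ = .inr w :: embList T p ∧ l₂ = embList T q) := by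
  rcases h with h | h
  · rcases List.append_eq_append_iff.1 h with ⟨c, hw, rfl⟩ | ⟨c, rfl, hc⟩
    · obtain ⟨p, q, hpq, rfl, rfl⟩ := embList_eq_append hw
      exact .inr <| .inr <| .inl ⟨p, q, hpq, rfl, rfl⟩
    · rcases List.cons_eq_append_iff.1 hc with ⟨rfl, rfl⟩ | ⟨c', rfl, hc'⟩
      · exact .inr <| .inr <| .inl ⟨w, 1, (mul_one _).symm, by simp, by simp⟩
      · exact .inr <| .inl (List.append_eq_nil_iff.1 hc'.symm).2
  · rcases List.cons_eq_append_iff.1 h.symm with ⟨rfl, -⟩ | ⟨c, rfl, hc⟩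
    · exact .inl rfl
    · obtain ⟨p, q, hpq, rfl, rfl⟩ := embList_eq_append hc
      exact .inr <| .inr <| .inr ⟨p, q, hpq, rfl, rfl⟩

theorem redexes_overlap_eq (hT : OverlapFree T) {m s t : List (X ⊕ T)} (hm : m ≠ [])
    (hs : s ≠ []) (ht : t ≠ []) (h₁ : m ++ s ∈ redexes T) (h₂ : s ++ t ∈ redexes T) :
    m = t := by
  obtain ⟨w, hw⟩ := Set.mem_iUnion.1 h₁
  obtain ⟨w', hw'⟩ := Set.mem_iUnion.1 h₂
  rcases append_mem_redexesOf_cases hw with rfl | rfl | ⟨p, q, hpq, rfl, rfl⟩ | ⟨p, q, hpq, rfl, rfl⟩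
    <;> try contradiction
  all_goals rcases append_mem_redexesOf_cases hw' with h | rfl | ⟨p', q', hpq', hs', rfl⟩ |
    ⟨p', q', hpq', hs', rfl⟩ <;> try contradiction
  · exact absurd (hs' ▸ by simp) (inr_not_mem_embList w p')
  · rcases List.append_eq_cons_iff.1 hs' with ⟨hq, hw⟩ | ⟨c, hq, -⟩
    · obtain ⟨rfl, hp'⟩ : w = w' ∧ [] = embList T p' := by simpa using hw
      rw [embList_eq_nil.1 hq, mul_one] at hpq
      rw [embList_eq_nil.1 hp'.symm, one_mul] at hpq'
      rw [← hpq, ← hpq']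
    · exact absurd (hq ▸ by simp) (inr_not_mem_embList w' q)
  · obtain rfl := embList_injective hs'
    have hq : q ≠ 1 := fun hq => hs (embList_eq_nil.2 hq)
    obtain ⟨rfl, rfl⟩ : p = 1 ∧ q' = 1 := by
      by_contra hne
      exact hT _ w.2 _ w'.2 ⟨p, q, q', hq, not_and_or.1 hne, hpq, hpq'⟩
    obtain rfl : w = w' := Subtype.ext (by rw [hpq, hpq', one_mul, mul_one])
    simp
  · exact absurd (hs' ▸ by simp) (inr_not_mem_embList w' q)

end Redexes

section Quotient

variable {T : Set (FreeMonoid X)}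

theorem natHom_mul_invElt (w : T) : natHom T w * invElt T w = 1 :=
  (Con.eq _).2 (ConGen.Rel.of _ _ (.mul_inv w))

theorem invElt_mul_natHom (w : T) : invElt T w * natHom T w = 1 :=
  (Con.eq _).2 (ConGen.Rel.of _ _ (.inv_mul w))

theorem mk'_ofList_redex {r : List (X ⊕ T)} (hr : r ∈ redexes T) :
    (invCon T).mk' (.ofList r) = 1 := by
  obtain ⟨w, hw⟩ := Set.mem_iUnion.1 hr
  rcases hw with rfl | rfl
  · exact natHom_mul_invElt w
  · exact invElt_mul_natHom w

theorem trivialCriticalPairs_redexes (hT : OverlapFree T) : TrivialCriticalPairs (redexes T) :=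
  ⟨fun _ hr _ hr' _ _ => redexes_infix_eq_nil hr hr', fun _ _ _ => redexes_overlap_eq hT⟩

theorem invCon_le_joinCon (hT : OverlapFree T) :
    invCon T ≤ (trivialCriticalPairs_redexes hT).joinCon := by
  refine Con.conGen_le.2 ?_
  rintro _ _ (⟨w⟩ | ⟨w⟩)
  · exact ⟨[], .single ⟨[], _, [], Set.mem_iUnion.2 ⟨w, .inl rfl⟩, by simp; rfl, rfl⟩, .refl⟩
  · exact ⟨[], .single ⟨[], _, [], Set.mem_iUnion.2 ⟨w, .inr rfl⟩, by simp; rfl, rfl⟩, .refl⟩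

def prefixSubmonoid (T : Set (FreeMonoid X)) : Submonoid (AdjInv T) :=
  Submonoid.closure (Set.range (invElt T) ∪
    {x | ∃ w ∈ T, ∃ p q : FreeMonoid X, p ≠ 1 ∧ w = p * q ∧ x = natHom T p})

def suffixSubmonoid (T : Set (FreeMonoid X)) : Submonoid (AdjInv T) :=
  Submonoid.closure (Set.range (invElt T) ∪
    {x | ∃ w ∈ T, ∃ p q : FreeMonoid X, q ≠ 1 ∧ w = p * q ∧ x = natHom T q})

theorem invElt_mem_prefixSubmonoid (w : T) : invElt T w ∈ prefixSubmonoid T :=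
  Submonoid.subset_closure (.inl ⟨w, rfl⟩)

theorem invElt_mem_suffixSubmonoid (w : T) : invElt T w ∈ suffixSubmonoid T :=
  Submonoid.subset_closure (.inl ⟨w, rfl⟩)

theorem natHom_mem_prefixSubmonoid {w : T} {p q : FreeMonoid X} (h : w.1 = p * q) :
    natHom T p ∈ prefixSubmonoid T := by
  rcases eq_or_ne p 1 with rfl | hp
  · exact map_one (natHom T) ▸ one_mem _
  · exact Submonoid.subset_closure (.inr ⟨w, w.2, p, q, hp, h, rfl⟩)

theorem natHom_mem_suffixSubmonoid {w : T} {p q : FreeMonoid X} (h : w.1 = p * q) :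
    natHom T q ∈ suffixSubmonoid T := by
  rcases eq_or_ne q 1 with rfl | hq
  · exact map_one (natHom T) ▸ one_mem _
  · exact Submonoid.subset_closure (.inr ⟨w, w.2, p, q, hq, h, rfl⟩)

theorem mk'_mem_of_redex_eq_append {r l₁ l₂ : List (X ⊕ T)} (hr : r ∈ redexes T)
    (h : r = l₁ ++ l₂) :
    (invCon T).mk' (.ofList l₁) ∈ prefixSubmonoid T ∧
      (invCon T).mk' (.ofList l₂) ∈ suffixSubmonoid T := by
  obtain ⟨w, hw⟩ := Set.mem_iUnion.1 hr
  subst h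
  rcases append_mem_redexesOf_cases hw with rfl | rfl | ⟨p, q, hpq, rfl, rfl⟩ | ⟨p, q, hpq, rfl, rfl⟩
  · rw [List.nil_append] at hr
    rw [mk'_ofList_redex hr]
    exact ⟨one_mem _, one_mem _⟩
  · rw [List.append_nil] at hr
    rw [mk'_ofList_redex hr]
    exact ⟨one_mem _, one_mem _⟩
  · exact ⟨natHom_mem_prefixSubmonoid hpq,
      mul_mem (natHom_mem_suffixSubmonoid hpq) (invElt_mem_suffixSubmonoid w)⟩
  · exact ⟨mul_mem (invElt_mem_prefixSubmonoid w) (natHom_mem_prefixSubmonoid hpq),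
      natHom_mem_suffixSubmonoid hpq⟩

theorem mem_of_mul_eq_one (hT : OverlapFree T) {u v : AdjInv T} (h : u * v = 1) :
    u ∈ prefixSubmonoid T ∧ v ∈ suffixSubmonoid T := by
  obtain ⟨x, rfl⟩ := (invCon T).mk'_surjective u
  obtain ⟨y, rfl⟩ := (invCon T).mk'_surjective v
  have hxy : (trivialCriticalPairs_redexes hT).joinCon (x * y) 1 :=
    invCon_le_joinCon hT <| (Con.eq _).1 <| show (invCon T).mk' (x * y) = (invCon T).mk' 1 by
      rw [map_mul, map_one]; exact h
  exact map_mem_of_reflTransGen_delStep_nil (invCon T).mk' (fun _ => mk'_ofList_redex)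
    (fun _ hr _ _ => mk'_mem_of_redex_eq_append hr)
    (TrivialCriticalPairs.reflTransGen_nil_of_joinCon _ hxy)

theorem exists_mul_eq_one_of_mem_prefixSubmonoid {u : AdjInv T} (hu : u ∈ prefixSubmonoid T) :
    ∃ v, u * v = 1 := by
  refine exists_right_inv_of_mem_closure ?_ hu
  rintro _ (⟨w, rfl⟩ | ⟨w, hw, p, q, -, rfl, rfl⟩)
  · exact ⟨natHom T w, invElt_mul_natHom w⟩
  · refine ⟨natHom T q * invElt T ⟨_, hw⟩, ?_⟩
    rw [← mul_assoc, ← map_mul]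
    exact natHom_mul_invElt ⟨_, hw⟩

theorem exists_mul_eq_one_of_mem_suffixSubmonoid {u : AdjInv T} (hu : u ∈ suffixSubmonoid T) :
    ∃ v, v * u = 1 := by
  refine exists_left_inv_of_mem_closure ?_ hu
  rintro _ (⟨w, rfl⟩ | ⟨w, hw, p, q, -, rfl, rfl⟩)
  · exact ⟨natHom T w, natHom_mul_invElt w⟩
  · refine ⟨invElt T ⟨_, hw⟩ * natHom T p, ?_⟩
    rw [mul_assoc, ← map_mul]
    exact invElt_mul_natHom ⟨_, hw⟩

end Quotient

theorem stmt5_general (X : Type*) (T : Set (FreeMonoid X))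
    (hT : OverlapFree T) (u : AdjInv T) :
    ((∃ v, u * v = 1) ↔ u ∈ Submonoid.closure
      (Set.range (invElt T) ∪
        {x | ∃ w ∈ T, ∃ p q : FreeMonoid X, p ≠ 1 ∧ w = p * q ∧ x = natHom T p})) ∧
    ((∃ v, v * u = 1) ↔ u ∈ Submonoid.closure
      (Set.range (invElt T) ∪
        {x | ∃ w ∈ T, ∃ p q : FreeMonoid X, q ≠ 1 ∧ w = p * q ∧ x = natHom T q})) := by
  exact ⟨⟨fun ⟨_, h⟩ => (mem_of_mul_eq_one hT h).1, exists_mul_eq_one_of_mem_prefixSubmonoid⟩,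
    ⟨fun ⟨_, h⟩ => (mem_of_mul_eq_one hT h).2, exists_mul_eq_one_of_mem_suffixSubmonoid⟩⟩

/-- an element of `⟨X : i(T)⟩` is right invertible iff it lies in the
submonoid generated by the `i(w)` and the images of nonempty prefixes of elements of
`T`; dually for left invertibility with suffixes. -/
theorem stmt5 (X : Type*) (T : Set (FreeMonoid X))
    (h1 : (1 : FreeMonoid X) ∉ T) (hT : OverlapFree T) (u : AdjInv T) :
    ((∃ v, u * v = 1) ↔ u ∈ Submonoid.closure
      (Set.range (invElt T) ∪
        {x | ∃ w ∈ T, ∃ p q : FreeMonoid X, p ≠ 1 ∧ w = p * q ∧ x = natHom T p})) ∧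
    ((∃ v, v * u = 1) ↔ u ∈ Submonoid.closure
      (Set.range (invElt T) ∪
        {x | ∃ w ∈ T, ∃ p q : FreeMonoid X, q ≠ 1 ∧ w = p * q ∧ x = natHom T q})) :=
  stmt5_general X T hT u

end AdjoinInverses
end

section
/- Let X be a set and T an overlap-free subset of ⟨X⟩\{1}. Then an element w of the free monoid ⟨X⟩ becomes invertible in ⟨X : i(T)⟩ if and only if w is a product of elements of T, and each such w has a unique expression as a product of elements of T; that is, the monoid of all elements of ⟨X⟩ that become invertible in ⟨X : i(T)⟩ is a free monoid, freely generated by T. -/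
namespace AdjoinInverses

variable {X : Type*}

/-!
Rewrite words over `X ⊔ T`, with `.inr t` standing for `i(t)`, by deleting factors `t i(t)` and
`i(t) t`. Each relator contains exactly one letter `i(t)`, so two relators can only overlap along a
word of `X`, and overlap-freeness of `T` makes every critical pair trivial: the system is
confluent and terminating, and a word equals `1` in `⟨X : i(T)⟩` iff it reduces to the empty word.

If `w` becomes invertible and an irreducible word `v` represents its inverse, then `v w` and
`w v` both reduce to the empty word. The first forces `v` to start with some `i(t)`, and then the
second forces `w` to end with `t`; stripping `t` and inducting on the length gives `w ∈ T*`.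
Uniqueness of the factorization holds because an overlap-free set is a prefix code.
-/

open Relation

namespace Deletion

variable {α : Type*} (L : Set (List α))

def Step (u v : List α) : Prop :=
  ∃ p ℓ q, ℓ ∈ L ∧ u = p ++ ℓ ++ q ∧ v = p ++ q

def Reducible (u : List α) : Prop :=
  ∃ ℓ ∈ L, ℓ <:+: u

def nullRel (x y : FreeMonoid α) : Prop :=
  x.toList ∈ L ∧ y = 1

variable {L}

theorem Step.reducible {u v : List α} (h : Step L u v) : Reducible L u := by
  obtain ⟨p, ℓ, q, hℓ, rfl, -⟩ := h
  exact ⟨ℓ, hℓ, List.infix_append p ℓ q⟩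

theorem Reducible.of_infix {u v : List α} (h : Reducible L u) (huv : u <:+: v) :
    Reducible L v :=
  let ⟨ℓ, hℓ, hinf⟩ := h
  ⟨ℓ, hℓ, hinf.trans huv⟩

theorem Step.length_lt (hL : [] ∉ L) {u v : List α} (h : Step L u v) : v.length < u.length := by
  obtain ⟨p, ℓ, q, hℓ, rfl, rfl⟩ := h
  have := List.length_pos_iff.2 (show ℓ ≠ [] from fun h => hL (h ▸ hℓ))
  simp only [List.length_append]
  omega

theorem Step.append_left {u v : List α} (h : Step L u v) (a : List α) :
    Step L (a ++ u) (a ++ v) := by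
  obtain ⟨p, ℓ, q, hℓ, rfl, rfl⟩ := h
  exact ⟨a ++ p, ℓ, q, hℓ, by simp, by simp⟩

theorem Step.append_right {u v : List α} (h : Step L u v) (c : List α) :
    Step L (u ++ c) (v ++ c) := by
  obtain ⟨p, ℓ, q, hℓ, rfl, rfl⟩ := h
  exact ⟨p, ℓ, q ++ c, hℓ, by simp, by simp⟩

theorem reflGen_append_left {u v : List α} (h : ReflGen (Step L) u v) (a : List α) :
    ReflGen (Step L) (a ++ u) (a ++ v) := by
  cases h with
  | refl => exact .refl
  | single h => exact .single (h.append_left a)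

theorem reflTransGen_append {u u' v v' : List α} (hu : ReflTransGen (Step L) u u')
    (hv : ReflTransGen (Step L) v v') : ReflTransGen (Step L) (u ++ v) (u' ++ v') :=
  (hu.lift (· ++ v) fun _ _ h => h.append_right v).trans
    (hv.lift (u' ++ ·) fun _ _ h => h.append_left u')

theorem eq_of_reflTransGen_of_not_reducible {u v : List α} (h : ReflTransGen (Step L) u v)
    (hu : ¬ Reducible L u) : v = u := by
  rcases h.cases_head with rfl | ⟨w, hw, -⟩
  · rfl
  · exact absurd hw.reducible hu

theorem exists_reflTransGen_not_reducible (hL : [] ∉ L) (u : List α) :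
    ∃ v, ReflTransGen (Step L) u v ∧ ¬ Reducible L v := by
  induction u using (measure List.length).wf.induction with
  | _ u ih =>
    by_cases hu : Reducible L u
    · obtain ⟨ℓ, hℓ, p, q, rfl⟩ := hu
      have hstep : Step L (p ++ ℓ ++ q) (p ++ q) := ⟨p, ℓ, q, hℓ, rfl, rfl⟩
      obtain ⟨v, hv, hirr⟩ := ih _ (hstep.length_lt hL)
      exact ⟨v, .head hstep hv, hirr⟩
    · exact ⟨u, .refl, hu⟩

theorem conGen_of_reflTransGen {u v : List α} (h : ReflTransGen (Step L) u v) :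
    conGen (nullRel L) (FreeMonoid.ofList u) (FreeMonoid.ofList v) := by
  induction h with
  | refl => exact (conGen _).refl _
  | tail _ hstep ih =>
    refine (conGen _).trans ih ?_
    obtain ⟨p, ℓ, q, hℓ, rfl, rfl⟩ := hstep
    have hℓ1 : conGen (nullRel L) (FreeMonoid.ofList ℓ) 1 := ConGen.Rel.of _ _ ⟨hℓ, rfl⟩
    have := (((conGen _).refl (FreeMonoid.ofList p)).mul hℓ1).mul ((conGen _).refl (FreeMonoid.ofList q))
    rwa [mul_one, ← FreeMonoid.ofList_append, ← FreeMonoid.ofList_append,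
      ← FreeMonoid.ofList_append] at this

section Confluence

/- The two hypotheses say that every critical pair of the deletion system is trivial: a relator
containing another one is equal to it, and two overlapping relators `m b`, `b c` leave the same
word `m = c` when deleted from `m b c`. -/
variable (hfactor : ∀ ℓ₁ ∈ L, ∀ ℓ₂ ∈ L, ∀ m c, ℓ₁ = m ++ ℓ₂ ++ c → m = [] ∧ c = [])
  (hoverlap : ∀ ℓ₁ ∈ L, ∀ ℓ₂ ∈ L, ∀ m b c, b ≠ [] → ℓ₁ = m ++ b → ℓ₂ = b ++ c → m = c)
include hfactor hoverlap

theorem join_of_append_eq {ℓ₁ ℓ₂ m q₁ q₂ : List α} (hℓ₁ : ℓ₁ ∈ L) (hℓ₂ : ℓ₂ ∈ L)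
    (h : ℓ₁ ++ q₁ = m ++ (ℓ₂ ++ q₂)) : Join (ReflGen (Step L)) q₁ (m ++ q₂) := by
  rcases List.append_eq_append_iff.1 h with ⟨a, rfl, rfl⟩ | ⟨b, rfl, hb⟩
  · exact ⟨a ++ q₂, .single ⟨a, ℓ₂, q₂, hℓ₂, by simp, rfl⟩,
      .single ⟨[], ℓ₁, a ++ q₂, hℓ₁, by simp, rfl⟩⟩
  rcases List.append_eq_append_iff.1 hb with ⟨c, rfl, rfl⟩ | ⟨c, rfl, rfl⟩
  · obtain ⟨rfl, rfl⟩ := hfactor _ hℓ₁ _ hℓ₂ m c (by simp)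
    exact ⟨q₁, .refl, by simpa using ReflGen.refl⟩
  rcases eq_or_ne b [] with rfl | hb
  · exact ⟨q₂, .single ⟨[], c, q₂, by simpa using hℓ₂, by simp, rfl⟩,
      .single ⟨[], m, q₂, by simpa using hℓ₁, by simp, rfl⟩⟩
  · obtain rfl := hoverlap _ hℓ₁ _ hℓ₂ m b c hb rfl rfl
    exact ⟨m ++ q₂, .refl, .refl⟩

theorem Step.join {u v₁ v₂ : List α} (h₁ : Step L u v₁) (h₂ : Step L u v₂) :
    Join (ReflGen (Step L)) v₁ v₂ := by
  obtain ⟨p₁, ℓ₁, q₁, hℓ₁, rfl, rfl⟩ := h₁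
  obtain ⟨p₂, ℓ₂, q₂, hℓ₂, he, rfl⟩ := h₂
  simp only [List.append_assoc] at he
  rcases List.append_eq_append_iff.1 he with ⟨m, rfl, h⟩ | ⟨m, rfl, h⟩
  · obtain ⟨d, hq₁, hq₂⟩ := join_of_append_eq hfactor hoverlap hℓ₁ hℓ₂ h
    exact ⟨p₁ ++ d, reflGen_append_left hq₁ p₁, by simpa using reflGen_append_left hq₂ p₁⟩
  · obtain ⟨d, hq₂, hq₁⟩ := join_of_append_eq hfactor hoverlap hℓ₂ hℓ₁ h
    exact ⟨p₂ ++ d, by simpa using reflGen_append_left hq₁ p₂, reflGen_append_left hq₂ p₂⟩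

theorem join_of_conGen {x y : FreeMonoid α} (h : conGen (nullRel L) x y) :
    Join (ReflTransGen (Step L)) x.toList y.toList := by
  have hequiv : Equivalence (Join (ReflTransGen (Step L))) :=
    equivalence_join_reflTransGen fun _ _ _ h₁ h₂ =>
      let ⟨d, hd₁, hd₂⟩ := Step.join hfactor hoverlap h₁ h₂
      ⟨d, hd₁, hd₂.to_reflTransGen⟩
  let c : Con (FreeMonoid α) :=
    { r := fun x y => Join (ReflTransGen (Step L)) x.toList y.toList
      iseqv := ⟨fun _ => hequiv.refl _, hequiv.symm, hequiv.trans⟩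
      mul' := fun ⟨d₁, h₁, h₁'⟩ ⟨d₂, h₂, h₂'⟩ =>
        ⟨d₁ ++ d₂, reflTransGen_append h₁ h₂, reflTransGen_append h₁' h₂'⟩ }
  have hle : conGen (nullRel L) ≤ c := Con.conGen_le.2 fun x y ⟨hx, hy⟩ =>
    hy ▸ ⟨[], .single ⟨[], x.toList, [], hx, by simp, rfl⟩, .refl⟩
  exact hle h

theorem reflTransGen_nil_of_conGen (hL : [] ∉ L) {x : FreeMonoid α}
    (h : conGen (nullRel L) x 1) : ReflTransGen (Step L) x.toList [] := by
  obtain ⟨d, hx, hd⟩ := join_of_conGen hfactor hoverlap h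
  have hnil : ¬ Reducible L [] := fun ⟨ℓ, hℓ, hinf⟩ => hL (List.eq_nil_of_infix_nil hinf ▸ hℓ)
  rwa [eq_of_reflTransGen_of_not_reducible hd hnil] at hx

end Confluence

end Deletion

theorem List.exists_of_append_cons_eq_append_of_not_mem_right {α : Type*} {x y m n : List α}
    {a : α} (ha : a ∉ n) (h : x ++ a :: y = m ++ n) : ∃ k, m = x ++ a :: k ∧ y = k ++ n := by
  rcases List.append_eq_append_iff.1 h with ⟨_ | ⟨b, k⟩, rfl, hy⟩ | ⟨k, rfl, rfl⟩
  · exact absurd (List.nil_append n ▸ hy ▸ List.mem_cons_self) ha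
  · obtain ⟨rfl, rfl⟩ := List.cons.inj hy
    exact ⟨k, rfl, rfl⟩
  · exact absurd (List.mem_append_right _ List.mem_cons_self) ha

theorem List.exists_of_append_cons_eq_append_of_not_mem_left {α : Type*} {x y m n : List α}
    {a : α} (ha : a ∉ m) (h : x ++ a :: y = m ++ n) : ∃ k, n = k ++ a :: y ∧ x = m ++ k := by
  rcases List.append_eq_append_iff.1 h with ⟨_ | ⟨b, k⟩, rfl, hy⟩ | ⟨k, rfl, rfl⟩
  · exact ⟨[], by simpa using hy.symm, by simp⟩
  · obtain ⟨rfl, -⟩ := List.cons.inj hy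
    exact absurd (List.mem_append_right _ List.mem_cons_self) ha
  · exact ⟨k, rfl, rfl⟩

def inlWord {β : Type*} (w : FreeMonoid X) : List (X ⊕ β) :=
  w.toList.map Sum.inl

section inlWord

variable {β : Type*}

@[simp]
theorem inr_not_mem_inlWord (b : β) (w : FreeMonoid X) : Sum.inr b ∉ inlWord w := by
  simp [inlWord]

@[simp]
theorem inlWord_eq_nil {w : FreeMonoid X} : (inlWord w : List (X ⊕ β)) = [] ↔ w = 1 := by
  simp [inlWord, ← FreeMonoid.length_eq_zero, FreeMonoid.length]

@[simp]
theorem inlWord_one : (inlWord 1 : List (X ⊕ β)) = [] := inlWord_eq_nil.2 rfl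

theorem inlWord_injective : Function.Injective (inlWord : FreeMonoid X → List (X ⊕ β)) :=
  fun _ _ h => FreeMonoid.toList.injective (List.map_injective_iff.2 Sum.inl_injective h)

theorem exists_of_inlWord_eq_append {w : FreeMonoid X} {a b : List (X ⊕ β)}
    (h : inlWord w = a ++ b) : ∃ u v, w = u * v ∧ a = inlWord u ∧ b = inlWord v := by
  obtain ⟨l₁, l₂, hl, rfl, rfl⟩ := List.map_eq_append_iff.1 h
  exact ⟨FreeMonoid.ofList l₁, FreeMonoid.ofList l₂, FreeMonoid.toList.injective hl, rfl, rfl⟩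

theorem exists_eq_inlWord {l : List (X ⊕ β)} (h : ∀ b, Sum.inr b ∉ l) : ∃ w, l = inlWord w := by
  induction l with
  | nil => exact ⟨1, rfl⟩
  | cons a l ih =>
    obtain ⟨w, rfl⟩ := ih fun b hb => h b (List.mem_cons_of_mem a hb)
    cases a with
    | inl x => exact ⟨FreeMonoid.of x * w, rfl⟩
    | inr b => exact absurd List.mem_cons_self (h b)

end inlWord

variable {T : Set (FreeMonoid X)}

variable (T) in
def relators : Set (List (X ⊕ T)) :=
  {ℓ | ∃ (t : T) (x y : List (X ⊕ T)),
    ℓ = x ++ .inr t :: y ∧ (x = inlWord t.1 ∧ y = [] ∨ x = [] ∧ y = inlWord t.1)}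

theorem invRel_eq_nullRel : InvRel T = Deletion.nullRel (relators T) := by
  ext x y
  constructor
  · rintro (⟨t⟩ | ⟨t⟩)
    · exact ⟨⟨t, inlWord t.1, [], rfl, .inl ⟨rfl, rfl⟩⟩, rfl⟩
    · exact ⟨⟨t, [], inlWord t.1, rfl, .inr ⟨rfl, rfl⟩⟩, rfl⟩
  · rintro ⟨⟨t, x', y', hx, ⟨rfl, rfl⟩ | ⟨rfl, rfl⟩⟩, rfl⟩
    · obtain rfl : x = emb T t.1 * igen T t := FreeMonoid.toList.injective hx
      exact .mul_inv t
    · obtain rfl : x = igen T t * emb T t.1 := FreeMonoid.toList.injective hx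
      exact .inv_mul t

theorem nil_not_mem_relators : [] ∉ relators T := by
  rintro ⟨t, x, y, h, -⟩
  simp at h

theorem not_reducible_inlWord (w : FreeMonoid X) :
    ¬ Deletion.Reducible (relators T) (inlWord w) := by
  rintro ⟨_, ⟨t, x, y, rfl, -⟩, hinf⟩
  exact inr_not_mem_inlWord t w (hinf.subset (by simp))

theorem split_of_mem_relators {ℓ x y : List (X ⊕ T)} {t : T} (hℓ : ℓ ∈ relators T)
    (h : ℓ = x ++ .inr t :: y) : x = inlWord t.1 ∧ y = [] ∨ x = [] ∧ y = inlWord t.1 := by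
  obtain ⟨s, x', y', rfl, hs⟩ := hℓ
  have hx' : .inr t ∉ x' := by rcases hs with ⟨rfl, -⟩ | ⟨rfl, -⟩ <;> simp
  have hy' : ∀ b, .inr b ∉ y' := by rcases hs with ⟨-, rfl⟩ | ⟨-, rfl⟩ <;> simp
  obtain ⟨k, hk, rfl⟩ := List.exists_of_append_cons_eq_append_of_not_mem_left hx' h.symm
  rcases k with _ | ⟨a, k⟩
  · obtain ⟨⟨⟩, rfl⟩ := List.cons.inj hk
    simpa using hs
  · obtain ⟨rfl, rfl⟩ := List.cons.inj hk
    exact absurd (by simp) (hy' t)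

theorem relators_factor : ∀ ℓ₁ ∈ relators T, ∀ ℓ₂ ∈ relators T, ∀ m c,
    ℓ₁ = m ++ ℓ₂ ++ c → m = [] ∧ c = [] := by
  rintro ℓ₁ hℓ₁ _ ⟨t, x, y, rfl, hxy⟩ m c rfl
  have h := split_of_mem_relators (x := m ++ x) (t := t) (y := y ++ c) hℓ₁ (by simp)
  rcases hxy with ⟨rfl, rfl⟩ | ⟨rfl, rfl⟩ <;> rcases h with ⟨h, h'⟩ | ⟨h, h'⟩ <;> simp_all

theorem relators_overlap (hT : OverlapFree T) : ∀ ℓ₁ ∈ relators T, ∀ ℓ₂ ∈ relators T,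
    ∀ m b c, b ≠ [] → ℓ₁ = m ++ b → ℓ₂ = b ++ c → m = c := by
  rintro ℓ₁ hℓ₁ ℓ₂ hℓ₂ m b c hb rfl rfl
  by_cases hinr : ∃ s, .inr s ∈ b
  · obtain ⟨s, hs⟩ := hinr
    obtain ⟨b₁, b₂, rfl⟩ := List.append_of_mem hs
    have h₁ := split_of_mem_relators (x := m ++ b₁) (t := s) (y := b₂) hℓ₁ (by simp)
    have h₂ := split_of_mem_relators (x := b₁) (t := s) (y := b₂ ++ c) hℓ₂ (by simp)
    rcases h₁ with ⟨h₁, rfl⟩ | ⟨h₁, rfl⟩ <;> rcases h₂ with ⟨rfl, h₂⟩ | ⟨rfl, h₂⟩ <;> simp_all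
  -- Otherwise `ℓ₁ = i(t₁) t₁` and `ℓ₂ = t₂ i(t₂)`, where `t₁` ends and `t₂` starts with `β`.
  simp only [not_exists] at hinr
  obtain ⟨β, rfl⟩ := exists_eq_inlWord hinr
  have hβ : β ≠ 1 := by simpa using hb
  obtain ⟨t₁, x₁, y₁, h₁, hxy₁⟩ := hℓ₁
  obtain ⟨t₂, x₂, y₂, h₂, hxy₂⟩ := hℓ₂
  obtain ⟨k₁, rfl, rfl⟩ :=
    List.exists_of_append_cons_eq_append_of_not_mem_right (inr_not_mem_inlWord t₁ β) h₁.symm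
  obtain ⟨k₂, rfl, rfl⟩ :=
    List.exists_of_append_cons_eq_append_of_not_mem_left (inr_not_mem_inlWord t₂ β) h₂.symm
  obtain ⟨rfl, ht₁⟩ : x₁ = [] ∧ inlWord t₁.1 = k₁ ++ inlWord β := by simp_all
  obtain ⟨ht₂, rfl⟩ : inlWord t₂.1 = inlWord β ++ k₂ ∧ y₂ = [] := by simp_all
  obtain ⟨μ, β', ht₁, rfl, hβ'⟩ := exists_of_inlWord_eq_append ht₁
  obtain ⟨β'', γ, ht₂, hβ'', rfl⟩ := exists_of_inlWord_eq_append ht₂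
  obtain rfl := inlWord_injective hβ'
  obtain rfl := inlWord_injective hβ''
  have hμγ : μ = 1 ∧ γ = 1 := by
    by_contra h
    exact hT _ t₁.2 _ t₂.2 ⟨μ, β, γ, hβ, not_and_or.1 h, ht₁, ht₂⟩
  obtain ⟨rfl, rfl⟩ := hμγ
  obtain rfl : t₁ = t₂ := Subtype.ext (by simp [ht₁, ht₂])
  simp

open Deletion

theorem exists_eq_mul_of_reflTransGen_nil {w : FreeMonoid X} {t : T} {v : List (X ⊕ T)}
    (hv : ¬ Reducible (relators T) (.inr t :: v))
    (h : ReflTransGen (Step (relators T)) (inlWord w ++ .inr t :: v) []) :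
    ∃ w₀, w = w₀ * t.1 := by
  obtain ⟨_, ⟨p, _, q, ⟨s, x, y, rfl, hxy⟩, hu, -⟩, -⟩ := h.cases_head.resolve_left (by simp)
  have hx : ∀ b, .inr b ∉ x := by rcases hxy with ⟨rfl, -⟩ | ⟨rfl, -⟩ <;> simp
  obtain ⟨k, hk, hpx⟩ := List.exists_of_append_cons_eq_append_of_not_mem_left
    (inr_not_mem_inlWord s w) (x := p ++ x) (y := y ++ q) (n := .inr t :: v) (by simp [hu])
  rcases k with _ | ⟨a, k⟩
  · obtain ⟨⟨⟩, rfl⟩ := List.cons.inj hk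
    rcases hxy with ⟨rfl, rfl⟩ | ⟨rfl, rfl⟩
    · obtain ⟨w₀, t', rfl, -, ht⟩ := exists_of_inlWord_eq_append (by simpa using hpx.symm)
      exact ⟨w₀, by rw [inlWord_injective ht]⟩
    · exact absurd ⟨_, ⟨t, [], inlWord t.1, rfl, .inr ⟨rfl, rfl⟩⟩, [], q, by simp⟩ hv
  · obtain ⟨rfl, rfl⟩ := List.cons.inj hk
    obtain ⟨k', rfl, rfl⟩ :=
      List.exists_of_append_cons_eq_append_of_not_mem_right (hx t) hpx.symm
    exact (hv ⟨_, ⟨s, x, y, rfl, hxy⟩, .inr t :: k', q, by simp⟩).elim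

theorem exists_eq_inr_cons_of_reflTransGen_nil {v : List (X ⊕ T)}
    (hv : ¬ Reducible (relators T) v) (hne : v ≠ []) {w : FreeMonoid X}
    (h : ReflTransGen (Step (relators T)) (v ++ inlWord w) []) : ∃ t v', v = .inr t :: v' := by
  induction v using (measure List.length).wf.induction generalizing w with
  | _ v ih =>
    -- The first deletion removes a factor `i(s) s` that starts in `v` and ends in `w`, so
    -- `v = p i(s) k` and what remains is `p w₂` for a suffix `w₂` of `w`.
    obtain ⟨_, ⟨p, _, q, ⟨s, x, y, rfl, hxy⟩, hu, rfl⟩, hred⟩ :=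
      h.cases_head.resolve_left (by simp [hne])
    obtain ⟨k, rfl, hk⟩ := List.exists_of_append_cons_eq_append_of_not_mem_right
      (inr_not_mem_inlWord s w) (x := p ++ x) (y := y ++ q) (m := v) (by rw [hu]; simp)
    rcases hxy with ⟨rfl, rfl⟩ | ⟨rfl, rfl⟩
    · exact absurd ⟨_, ⟨s, inlWord s.1, [], rfl, .inl ⟨rfl, rfl⟩⟩, p, k, by simp⟩ hv
    rcases p with _ | ⟨a, p⟩
    · exact ⟨s, k, rfl⟩
    rcases List.append_eq_append_iff.1 hk with ⟨k', rfl, rfl⟩ | ⟨k', -, hw⟩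
    · exact absurd ⟨_, ⟨s, [], inlWord s.1, rfl, .inr ⟨rfl, rfl⟩⟩, a :: p, k', by simp⟩ hv
    obtain ⟨-, w₂, -, -, rfl⟩ := exists_of_inlWord_eq_append hw
    obtain ⟨t, p', hp'⟩ := ih (a :: p) (show List.length _ < List.length _ by simp)
      (fun hr => hv (hr.of_infix (by simpa using List.infix_append [] (a :: p) _))) (by simp) hred
    exact ⟨t, p' ++ .inr s :: k, by simp [hp']⟩

theorem invCon_eq_conGen : invCon T = conGen (nullRel (relators T)) := by
  rw [invCon, invRel_eq_nullRel]

theorem reflTransGen_nil_of_mk'_eq_one (hT : OverlapFree T) {x : FreeMonoid (X ⊕ T)}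
    (h : (invCon T).mk' x = 1) : ReflTransGen (Step (relators T)) x.toList [] := by
  have hx : invCon T x 1 := (invCon T).eq.1 h
  rw [invCon_eq_conGen] at hx
  exact reflTransGen_nil_of_conGen relators_factor (relators_overlap hT) nil_not_mem_relators hx

theorem exists_eq_mul_mem_of_isUnit (hT : OverlapFree T) {w : FreeMonoid X}
    (hw : IsUnit (natHom T w)) (hw1 : w ≠ 1) : ∃ w₀, ∃ t ∈ T, w = w₀ * t := by
  obtain ⟨U, hU⟩ := hw
  obtain ⟨v₀, hv₀⟩ := Con.mk'_surjective (c := invCon T) ((U⁻¹ : (AdjInv T)ˣ) : AdjInv T)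
  obtain ⟨v, hv₀v, hv⟩ := exists_reflTransGen_not_reducible nil_not_mem_relators v₀.toList
  have hvU : (invCon T).mk' (FreeMonoid.ofList v) = ((U⁻¹ : (AdjInv T)ˣ) : AdjInv T) := by
    rw [← hv₀]
    exact ((invCon T).eq.2 (invCon_eq_conGen ▸ conGen_of_reflTransGen hv₀v)).symm
  have hwU : (invCon T).mk' (emb T w) = (U : AdjInv T) := hU.symm
  have h₁ : ReflTransGen (Step (relators T)) (inlWord w ++ v) [] :=
    reflTransGen_nil_of_mk'_eq_one hT (x := emb T w * FreeMonoid.ofList v)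
      (by rw [map_mul, hwU, hvU]; exact U.mul_inv)
  have h₂ : ReflTransGen (Step (relators T)) (v ++ inlWord w) [] :=
    reflTransGen_nil_of_mk'_eq_one hT (x := FreeMonoid.ofList v * emb T w)
      (by rw [map_mul, hwU, hvU]; exact U.inv_mul)
  have hv_ne : v ≠ [] := by
    rintro rfl
    refine hw1 (inlWord_eq_nil (β := T).1 ?_)
    exact (eq_of_reflTransGen_of_not_reducible (by simpa using h₁) (not_reducible_inlWord w)).symm
  obtain ⟨t, v', rfl⟩ := exists_eq_inr_cons_of_reflTransGen_nil hv hv_ne h₂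
  obtain ⟨w₀, rfl⟩ := exists_eq_mul_of_reflTransGen_nil hv h₁
  exact ⟨w₀, t, t.2, rfl⟩

theorem isUnit_natHom_of_mem {t : FreeMonoid X} (ht : t ∈ T) : IsUnit (natHom T t) := by
  refine isUnit_iff_exists.2 ⟨invElt T ⟨t, ht⟩, ?_, ?_⟩
  · exact ((invCon T).eq.2 (ConGen.Rel.of _ _ (InvRel.mul_inv ⟨t, ht⟩)) :)
  · exact ((invCon T).eq.2 (ConGen.Rel.of _ _ (InvRel.inv_mul ⟨t, ht⟩)) :)

theorem exists_prod_eq_of_isUnit (h1 : (1 : FreeMonoid X) ∉ T) (hT : OverlapFree T)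
    {w : FreeMonoid X} (hw : IsUnit (natHom T w)) :
    ∃ l : List (FreeMonoid X), (∀ x ∈ l, x ∈ T) ∧ l.prod = w := by
  induction w using (measure FreeMonoid.length).wf.induction with
  | _ w ih =>
    rcases eq_or_ne w 1 with rfl | hw1
    · exact ⟨[], by simp, rfl⟩
    obtain ⟨w₀, t, ht, rfl⟩ := exists_eq_mul_mem_of_isUnit hT hw hw1
    have ht1 : t.length ≠ 0 := fun h => h1 (FreeMonoid.length_eq_zero.1 h ▸ ht)
    rw [map_mul, (isUnit_natHom_of_mem ht).mul_right_iff] at hw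
    obtain ⟨l, hl, rfl⟩ := ih w₀
      (show FreeMonoid.length _ < FreeMonoid.length _ by rw [FreeMonoid.length_mul]; omega) hw
    exact ⟨l ++ [t], by simpa [or_imp, forall_and] using ⟨hl, ht⟩, by simp⟩

theorem eq_of_mul_eq_mul (h1 : (1 : FreeMonoid X) ∉ T) (hT : OverlapFree T)
    {t₁ t₂ u₁ u₂ : FreeMonoid X} (ht₁ : t₁ ∈ T) (ht₂ : t₂ ∈ T) (h : t₁ * u₁ = t₂ * u₂) :
    t₁ = t₂ := by
  have of_prefix {s₁ s₂ : FreeMonoid X} (hs₁ : s₁ ∈ T) (hs₂ : s₂ ∈ T) (m : List X)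
      (hm : s₂.toList = s₁.toList ++ m) : s₁ = s₂ := by
    rcases eq_or_ne m [] with rfl | hm0
    · exact FreeMonoid.toList.injective (by simpa using hm.symm)
    · have hm1 : FreeMonoid.ofList m ≠ 1 := fun h =>
        hm0 (FreeMonoid.ofList.injective (h.trans FreeMonoid.ofList_nil.symm))
      exact (hT _ hs₁ _ hs₂ ⟨1, s₁, FreeMonoid.ofList m, fun h => h1 (h ▸ hs₁), .inr hm1,
        (one_mul _).symm, FreeMonoid.toList.injective hm⟩).elim
  have h' : t₁.toList ++ u₁.toList = t₂.toList ++ u₂.toList := congrArg FreeMonoid.toList h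
  rcases List.append_eq_append_iff.1 h' with ⟨m, hm, -⟩ | ⟨m, hm, -⟩
  · exact of_prefix ht₁ ht₂ m hm
  · exact (of_prefix ht₂ ht₁ m hm).symm

theorem eq_of_prod_eq_prod (h1 : (1 : FreeMonoid X) ∉ T) (hT : OverlapFree T) :
    ∀ {l l' : List (FreeMonoid X)}, (∀ x ∈ l, x ∈ T) → (∀ x ∈ l', x ∈ T) →
      l.prod = l'.prod → l = l'
  | [], [], _, _, _ => rfl
  | [], t :: l', _, hl', h => (h1 (by simp_all [eq_comm (a := (1 : FreeMonoid X))])).elim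
  | t :: l, [], hl, _, h => (h1 (by simp_all)).elim
  | t :: l, t' :: l', hl, hl', h => by
    simp only [List.prod_cons] at h
    obtain rfl := eq_of_mul_eq_mul h1 hT (hl t (by simp)) (hl' t' (by simp)) h
    rw [eq_of_prod_eq_prod h1 hT (fun x hx => hl x (.tail _ hx)) (fun x hx => hl' x (.tail _ hx))
      (mul_left_cancel h)]

/-- an element of `⟨X⟩` becomes invertible in `⟨X : i(T)⟩` iff it is a
product of elements of `T`, and such an expression is unique; i.e. the monoid of
elements of `⟨X⟩` becoming invertible is free on `T`. -/
theorem stmt8 (X : Type*) (T : Set (FreeMonoid X))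
    (h1 : (1 : FreeMonoid X) ∉ T) (hT : OverlapFree T) :
    (∀ w : FreeMonoid X, IsUnit (natHom T w) ↔
      ∃ l : List (FreeMonoid X), (∀ x ∈ l, x ∈ T) ∧ l.prod = w) ∧
    (∀ l l' : List (FreeMonoid X), (∀ x ∈ l, x ∈ T) → (∀ x ∈ l', x ∈ T) →
      l.prod = l'.prod → l = l') := by
  refine ⟨fun w => ⟨exists_prod_eq_of_isUnit h1 hT, ?_⟩, fun _ _ => eq_of_prod_eq_prod h1 hT⟩
  rintro ⟨l, hl, rfl⟩
  rw [map_list_prod]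
  exact List.prod_isUnit (by simpa using fun x hx => isUnit_natHom_of_mem (hl x hx))

end AdjoinInverses
end
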